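/- Let H be a connected component of a graph G that is connected and satisfies e(H) < √(2·e(G)). Then in every modularity-optimal partition of G, the vertex set of H is not split (it lies in a single part). -/

import Mathlib

open Finset
open scoped Classical

noncomputable section

variable {V : Type*} [Fintype V]

/-- Number of edges between `A` and `B` (each cross edge counted once when `A`,`B` disjoint). -/
def ecut (G : SimpleGraph V) (A B : Finset V) : ℝ :=
  ((A ×ˢ B).filter fun p => G.Adj p.1 p.2).card

/-- Number of edges inside `A`. -/
def ein (G : SimpleGraph V) (A : Finset V) : ℝ := ecut G A A / 2

/-- Volume of a vertex set: sum of degrees. -/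
def gvol (G : SimpleGraph V) (A : Finset V) : ℝ := ∑ v ∈ A, (G.degree v : ℝ)

/-- Number of edges of `G`. -/
def edgecount (G : SimpleGraph V) : ℝ := (G.edgeFinset.card : ℝ)

/-- Conductance (Cheeger constant) `h_G`. -/
def conduct (G : SimpleGraph V) : ℝ :=
  sInf { x | ∃ A : Finset V, A.Nonempty ∧ A ≠ univ ∧
    x = ecut G A Aᶜ / min (gvol G A) (gvol G Aᶜ) }

/-- Expansion-by-products `ĥ_G`. -/
def hhat (G : SimpleGraph V) : ℝ :=
  sInf { x | ∃ A : Finset V, A.Nonempty ∧ A ≠ univ ∧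
    x = ecut G A Aᶜ * gvol G univ / (gvol G A * gvol G Aᶜ) }

/-- Modularity score of a vertex partition. -/
def modScore (G : SimpleGraph V) (P : Finpartition (univ : Finset V)) : ℝ :=
  (∑ A ∈ P.parts, ein G A) / edgecount G
    - (∑ A ∈ P.parts, (gvol G A) ^ 2) / (4 * (edgecount G) ^ 2)

/-- Modularity `q*(G)`: maximum modularity score over vertex partitions. -/
def modularity (G : SimpleGraph V) : ℝ :=
  sSup { x | ∃ P : Finpartition (univ : Finset V), x = modScore G P }

set_option linter.unusedSectionVars false

lemma ecut_eq_sum (G : SimpleGraph V) (A B : Finset V) :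
    ecut G A B = ∑ a ∈ A, ∑ b ∈ B, if G.Adj a b then (1:ℝ) else 0 := by
  unfold ecut
  rw [Finset.card_filter]
  push_cast
  rw [Finset.sum_product]

lemma ecut_nonneg (G : SimpleGraph V) (A B : Finset V) : 0 ≤ ecut G A B := by
  unfold ecut; positivity

lemma ein_nonneg (G : SimpleGraph V) (A : Finset V) : 0 ≤ ein G A := by
  unfold ein; have := ecut_nonneg G A A; linarith

lemma ecut_comm (G : SimpleGraph V) (A B : Finset V) : ecut G A B = ecut G B A := by
  rw [ecut_eq_sum, ecut_eq_sum, Finset.sum_comm]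
  simp_rw [G.adj_comm]

lemma ecut_union_left (G : SimpleGraph V) {A B : Finset V} (C : Finset V)
    (h : Disjoint A B) : ecut G (A ∪ B) C = ecut G A C + ecut G B C := by
  rw [ecut_eq_sum, ecut_eq_sum, ecut_eq_sum, Finset.sum_union h]

lemma ecut_union_right (G : SimpleGraph V) (C : Finset V) {A B : Finset V}
    (h : Disjoint A B) : ecut G C (A ∪ B) = ecut G C A + ecut G C B := by
  rw [ecut_comm, ecut_union_left G C h, ecut_comm G A C, ecut_comm G B C]

lemma gvol_nonneg (G : SimpleGraph V) (A : Finset V) : 0 ≤ gvol G A := by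
  unfold gvol; positivity

lemma gvol_union (G : SimpleGraph V) {A B : Finset V} (h : Disjoint A B) :
    gvol G (A ∪ B) = gvol G A + gvol G B := Finset.sum_union h

lemma gvol_mono (G : SimpleGraph V) {A B : Finset V} (h : A ⊆ B) :
    gvol G A ≤ gvol G B :=
  Finset.sum_le_sum_of_subset_of_nonneg h (fun _ _ _ => by positivity)

lemma gvol_eq_ecut_univ (G : SimpleGraph V) (A : Finset V) :
    gvol G A = ecut G A univ := by
  rw [ecut_eq_sum]
  refine Finset.sum_congr rfl fun v _ => ?_
  rw [SimpleGraph.degree, SimpleGraph.neighborFinset_eq_filter, Finset.natCast_card_filter]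

lemma gvol_univ (G : SimpleGraph V) : gvol G univ = 2 * edgecount G := by
  unfold gvol edgecount
  rw [← Nat.cast_sum, SimpleGraph.sum_degrees_eq_twice_card_edges]
  push_cast; ring

/-- cut between a subset of a component and a set avoiding the component is zero -/
lemma ecut_component_zero (G : SimpleGraph V) (c : G.ConnectedComponent)
    {S X Y : Finset V} (hS : S = univ.filter fun v => G.connectedComponentMk v = c)
    (hX : X ⊆ S) (hY : Disjoint Y S) : ecut G X Y = 0 := by
  rw [ecut_eq_sum]
  refine Finset.sum_eq_zero fun a ha => Finset.sum_eq_zero fun b hb => ?_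
  rw [if_neg]
  intro hadj
  have haS : a ∈ S := hX ha
  have : G.connectedComponentMk a = c := by
    rw [hS] at haS; simpa using haS
  have hbS : b ∈ S := by
    rw [hS]; simp [← SimpleGraph.ConnectedComponent.connectedComponentMk_eq_of_adj hadj, this]
  exact (Finset.disjoint_right.mp hY) hbS hb

lemma gvol_component (G : SimpleGraph V) (c : G.ConnectedComponent)
    {S : Finset V} (hS : S = univ.filter fun v => G.connectedComponentMk v = c) :
    gvol G S = 2 * ein G S := by
  have hsplit : (univ : Finset V) = S ∪ Sᶜ := by simp
  rw [gvol_eq_ecut_univ, hsplit, ecut_union_right G S (disjoint_compl_right)]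
  rw [ecut_component_zero G c hS (le_refl S) (disjoint_compl_left : Disjoint Sᶜ S)]
  unfold ein; ring

/-- modScore is at most 1. -/
lemma modScore_le_one (G : SimpleGraph V) (P : Finpartition (univ : Finset V))
    (hm : 0 < edgecount G) : modScore G P ≤ 1 := by
  have hsum : (∑ A ∈ P.parts, ein G A) ≤ edgecount G := by
    have h1 : ∀ A ∈ P.parts, ecut G A A ≤ ecut G A univ := by
      intro A _
      rw [ecut_eq_sum, ecut_eq_sum]
      refine Finset.sum_le_sum fun a _ => ?_
      refine Finset.sum_le_sum_of_subset_of_nonneg (Finset.subset_univ A) fun b _ _ => ?_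
      positivity
    have h2 : (∑ A ∈ P.parts, ecut G A univ) = 2 * edgecount G := by
      have := P.sup_parts
      have hbi : P.parts.biUnion id = univ := P.biUnion_parts
      have hd : (P.parts : Set (Finset V)).PairwiseDisjoint id :=
        Finset.supIndep_iff_pairwiseDisjoint.mp P.supIndep
      calc (∑ A ∈ P.parts, ecut G A univ) = ∑ A ∈ P.parts, gvol G A := by
            refine Finset.sum_congr rfl fun A _ => (gvol_eq_ecut_univ G A).symm
        _ = ∑ v ∈ P.parts.biUnion id, (G.degree v : ℝ) := by
            rw [Finset.sum_biUnion hd]; rfl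
        _ = gvol G univ := by rw [hbi]; rfl
        _ = 2 * edgecount G := gvol_univ G
    have h3 : (∑ A ∈ P.parts, ecut G A A) ≤ 2 * edgecount G := by
      rw [← h2]; exact Finset.sum_le_sum h1
    unfold ein
    rw [← Finset.sum_div]
    linarith
  have hpen : 0 ≤ (∑ A ∈ P.parts, (gvol G A) ^ 2) / (4 * (edgecount G) ^ 2) := by
    positivity
  unfold modScore
  have : (∑ A ∈ P.parts, ein G A) / edgecount G ≤ 1 := by
    rw [div_le_one hm]; exact hsum
  linarith

lemma bddAbove_modScore (G : SimpleGraph V) (hm : 0 < edgecount G) :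
    BddAbove { x | ∃ P : Finpartition (univ : Finset V), x = modScore G P } := by
  refine ⟨1, fun x hx => ?_⟩
  obtain ⟨P, rfl⟩ := hx
  exact modScore_le_one G P hm

/-- along a walk whose endpoints lie in different parts, some edge crosses parts -/
lemma exists_cross_edge (G : SimpleGraph V) (P : Finpartition (univ : Finset V)) :
    ∀ {a b : V} (_ : G.Walk a b), P.part a ≠ P.part b →
      ∃ x y, G.Adj x y ∧ P.part x ≠ P.part y ∧
        G.connectedComponentMk x = G.connectedComponentMk a := by
  intro a b w
  induction w with
  | nil => intro h; exact absurd rfl h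
  | @cons u v b h p ih =>
    intro hne
    by_cases hc : P.part u = P.part v
    · obtain ⟨x, y, hxy, hpxy, hcomp⟩ := ih (hc ▸ hne)
      exact ⟨x, y, hxy, hpxy, hcomp.trans
        (SimpleGraph.ConnectedComponent.connectedComponentMk_eq_of_adj h).symm⟩
    · exact ⟨u, v, h, hc, rfl⟩

set_option maxHeartbeats 1000000 in
/-- resolution limit: A connected component `H` (vertex set `S`) of `G` with
`e(H) < √(2 e(G))` is not split in any modularity-optimal partition of `G`. -/
theorem stmt12 {V : Type*} [Fintype V] (G : SimpleGraph V) (hG : G.edgeFinset.Nonempty)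
    (c : G.ConnectedComponent) (S : Finset V)
    (hS : S = univ.filter fun v => G.connectedComponentMk v = c)
    (hsmall : ein G S < Real.sqrt (2 * edgecount G)) :
    ∀ P : Finpartition (univ : Finset V), modScore G P = modularity G →
      ∃ A ∈ P.parts, S ⊆ A := by
  intro P hP
  by_contra hcon
  push_neg at hcon
  have hm : 0 < edgecount G := by
    unfold edgecount; exact_mod_cast Finset.card_pos.mpr hG
  -- S is nonempty
  obtain ⟨v0, hv0⟩ := c.exists_rep
  have hv0S : v0 ∈ S := by rw [hS]; simp only [Finset.mem_filter, mem_univ, true_and]; exact hv0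
  have hA0mem : P.part v0 ∈ P.parts := P.part_mem.mpr (mem_univ v0)
  obtain ⟨b, hbS, hbA0⟩ := Finset.not_subset.mp (hcon _ hA0mem)
  have hbcomp : G.connectedComponentMk b = c := by rw [hS] at hbS; simpa using hbS
  have hcompeq : G.connectedComponentMk v0 = G.connectedComponentMk b := hv0.trans hbcomp.symm
  have hreach : G.Reachable v0 b := (SimpleGraph.ConnectedComponent.eq).mp hcompeq
  obtain ⟨w⟩ := hreach
  have hne0 : P.part v0 ≠ P.part b := by
    intro h
    exact hbA0 (h ▸ P.mem_part (mem_univ b))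
  obtain ⟨x, y, hxy, hpne, hxcomp⟩ := exists_cross_edge G P w hne0
  have hxS : x ∈ S := by rw [hS]; simp [hxcomp.trans hv0]
  have hyS : y ∈ S := by
    rw [hS]
    simp [(SimpleGraph.ConnectedComponent.connectedComponentMk_eq_of_adj hxy).symm.trans
      (hxcomp.trans hv0)]
  set A := P.part x with hA
  set B := P.part y with hB
  have hAmem : A ∈ P.parts := P.part_mem.mpr (mem_univ x)
  have hBmem : B ∈ P.parts := P.part_mem.mpr (mem_univ y)
  have hxA : x ∈ A := P.mem_part (mem_univ x)
  have hyB : y ∈ B := P.mem_part (mem_univ y)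
  have hABne : A ≠ B := hpne
  have hPD : (P.parts : Set (Finset V)).PairwiseDisjoint id :=
    Finset.supIndep_iff_pairwiseDisjoint.mp P.supIndep
  have hdAB : Disjoint A B := hPD hAmem hBmem hABne
  -- the surgery
  set X := A ∩ S with hXdef
  set Y := B ∩ S with hYdef
  set M := X ∪ Y with hMdef
  set A' := A \ S with hA'def
  set B' := B \ S with hB'def
  set O := P.parts \ {A, B} with hOdef
  have hXS : X ⊆ S := Finset.inter_subset_right
  have hYS : Y ⊆ S := Finset.inter_subset_right
  have hMS : M ⊆ S := Finset.union_subset hXS hYS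
  have hXA : X ⊆ A := Finset.inter_subset_left
  have hYB : Y ⊆ B := Finset.inter_subset_left
  have hA'S : Disjoint A' S := Finset.sdiff_disjoint
  have hB'S : Disjoint B' S := Finset.sdiff_disjoint
  have hA'A : A' ⊆ A := Finset.sdiff_subset
  have hB'B : B' ⊆ B := Finset.sdiff_subset
  have hAdec : X ∪ A' = A := by
    rw [Finset.union_comm]; exact Finset.sdiff_union_inter A S
  have hBdec : Y ∪ B' = B := by
    rw [Finset.union_comm]; exact Finset.sdiff_union_inter B S
  have hXY : Disjoint X Y := hdAB.mono hXA hYB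
  have hXA' : Disjoint X A' := (hA'S.symm).mono_left hXS
  have hYB' : Disjoint Y B' := (hB'S.symm).mono_left hYS
  have hMA' : Disjoint M A' := (hA'S.symm).mono_left hMS
  have hMB' : Disjoint M B' := (hB'S.symm).mono_left hMS
  have hA'B' : Disjoint A' B' := hdAB.mono hA'A hB'B
  have hMne : M.Nonempty := ⟨x, Finset.mem_union_left _ (Finset.mem_inter.mpr ⟨hxA, hxS⟩)⟩
  have hOfacts : ∀ C ∈ O, C ∈ P.parts ∧ C ≠ A ∧ C ≠ B := by
    intro C hC
    rw [hOdef, Finset.mem_sdiff, Finset.mem_insert, Finset.mem_singleton] at hC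
    exact ⟨hC.1, fun h => hC.2 (Or.inl h), fun h => hC.2 (Or.inr h)⟩
  have hdA : ∀ C ∈ O, Disjoint A C := fun C hC =>
    hPD hAmem (hOfacts C hC).1 (fun h => (hOfacts C hC).2.1 h.symm)
  have hdB : ∀ C ∈ O, Disjoint B C := fun C hC =>
    hPD hBmem (hOfacts C hC).1 (fun h => (hOfacts C hC).2.2 h.symm)
  have hMC : ∀ C ∈ O, Disjoint M C := fun C hC =>
    ((Finset.disjoint_union_left).mpr
      ⟨(hdA C hC).mono_left hXA, (hdB C hC).mono_left hYB⟩)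
  have hA'C : ∀ C ∈ O, Disjoint A' C := fun C hC => (hdA C hC).mono_left hA'A
  have hB'C : ∀ C ∈ O, Disjoint B' C := fun C hC => (hdB C hC).mono_left hB'B
  set pieces := ({A', B'} : Finset (Finset V)).filter Finset.Nonempty with hpieces
  set parts' := insert M (O ∪ pieces) with hparts'
  have hmem' : ∀ t, t ∈ parts' → t = M ∨ t ∈ O ∨ t = A' ∨ t = B' := by
    intro t ht
    rw [hparts', Finset.mem_insert, Finset.mem_union, hpieces, Finset.mem_filter,
      Finset.mem_insert, Finset.mem_singleton] at ht
    tauto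
  have hMnotin : M ∉ O ∪ pieces := by
    intro h
    rw [Finset.mem_union, hpieces, Finset.mem_filter, Finset.mem_insert,
      Finset.mem_singleton] at h
    rcases h with h | ⟨h | h, _⟩
    · exact hMne.ne_empty (disjoint_self.mp (hMC M h))
    · exact hMne.ne_empty (disjoint_self.mp (by rw [h] at hMA' ⊢; exact hMA'))
    · exact hMne.ne_empty (disjoint_self.mp (by rw [h] at hMB' ⊢; exact hMB'))
  have hOpieces : Disjoint O pieces := by
    rw [Finset.disjoint_left]
    intro t htO htp
    rw [hpieces, Finset.mem_filter, Finset.mem_insert, Finset.mem_singleton] at htp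
    rcases htp with ⟨h | h, hne⟩
    · exact hne.ne_empty (disjoint_self.mp (by rw [← h] at hA'C; exact (hA'C t htO)))
    · exact hne.ne_empty (disjoint_self.mp (by rw [← h] at hB'C; exact (hB'C t htO)))
  -- build the new partition
  have hsupindep : parts'.SupIndep id := by
    rw [Finset.supIndep_iff_pairwiseDisjoint]
    intro s hs t ht hst
    have hs' := hmem' s hs
    have ht' := hmem' t ht
    show Disjoint s t
    rcases hs' with rfl | hsO | rfl | rfl <;> rcases ht' with rfl | htO | rfl | rfl
    · exact absurd rfl hst
    · exact hMC t htO
    · exact hMA'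
    · exact hMB'
    · exact (hMC s hsO).symm
    · exact hPD (hOfacts s hsO).1 (hOfacts t htO).1 hst
    · exact (hA'C s hsO).symm
    · exact (hB'C s hsO).symm
    · exact hMA'.symm
    · exact hA'C t htO
    · exact absurd rfl hst
    · exact hA'B'
    · exact hMB'.symm
    · exact hB'C t htO
    · exact hA'B'.symm
    · exact absurd rfl hst
  have hsup : parts'.sup id = univ := by
    apply Finset.eq_univ_of_forall
    intro v
    rw [Finset.mem_sup]
    have hvpart : v ∈ P.part v := P.mem_part (mem_univ v)
    have hvmem : P.part v ∈ P.parts := P.part_mem.mpr (mem_univ v)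
    by_cases hvA : P.part v = A
    · by_cases hvS : v ∈ S
      · exact ⟨M, Finset.mem_insert_self _ _,
          Finset.mem_union_left _ (Finset.mem_inter.mpr ⟨hvA ▸ hvpart, hvS⟩)⟩
      · refine ⟨A', ?_, Finset.mem_sdiff.mpr ⟨hvA ▸ hvpart, hvS⟩⟩
        rw [hparts', Finset.mem_insert]
        right
        rw [Finset.mem_union, hpieces, Finset.mem_filter]
        exact Or.inr ⟨by simp, ⟨v, Finset.mem_sdiff.mpr ⟨hvA ▸ hvpart, hvS⟩⟩⟩
    · by_cases hvB : P.part v = B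
      · by_cases hvS : v ∈ S
        · exact ⟨M, Finset.mem_insert_self _ _,
            Finset.mem_union_right _ (Finset.mem_inter.mpr ⟨hvB ▸ hvpart, hvS⟩)⟩
        · refine ⟨B', ?_, Finset.mem_sdiff.mpr ⟨hvB ▸ hvpart, hvS⟩⟩
          rw [hparts', Finset.mem_insert]
          right
          rw [Finset.mem_union, hpieces, Finset.mem_filter]
          exact Or.inr ⟨by simp, ⟨v, Finset.mem_sdiff.mpr ⟨hvB ▸ hvpart, hvS⟩⟩⟩
      · refine ⟨P.part v, ?_, hvpart⟩
        rw [hparts', Finset.mem_insert]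
        right
        rw [Finset.mem_union]
        left
        rw [hOdef, Finset.mem_sdiff, Finset.mem_insert, Finset.mem_singleton]
        exact ⟨hvmem, by tauto⟩
  have hnotbot : ⊥ ∉ parts' := by
    intro h
    rw [hparts', Finset.mem_insert, Finset.mem_union, hpieces, Finset.mem_filter] at h
    rcases h with h | h | ⟨_, hne⟩
    · exact hMne.ne_empty h.symm
    · exact P.bot_notMem (Finset.mem_sdiff.mp h).1
    · exact hne.ne_empty rfl
  set P' : Finpartition (univ : Finset V) := ⟨parts', hsupindep, hsup, hnotbot⟩ with hP'
  have hP'parts : P'.parts = parts' := by rw [hP']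
  -- sum lemmas
  have hPparts : P.parts = insert A (insert B O) := by
    ext t
    rw [Finset.mem_insert, Finset.mem_insert, hOdef, Finset.mem_sdiff,
      Finset.mem_insert, Finset.mem_singleton]
    constructor
    · intro ht
      by_cases h1 : t = A
      · exact Or.inl h1
      · by_cases h2 : t = B
        · exact Or.inr (Or.inl h2)
        · exact Or.inr (Or.inr ⟨ht, by tauto⟩)
    · rintro (rfl | rfl | ⟨ht, _⟩)
      · exact hAmem
      · exact hBmem
      · exact ht
  have hAnotin : A ∉ insert B O := by
    rw [Finset.mem_insert]
    rintro (h | h)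
    · exact hABne h
    · exact (hOfacts A h).2.1 rfl
  have hBnotin : B ∉ O := fun h => (hOfacts B h).2.2 rfl
  have hsumP : ∀ f : Finset V → ℝ,
      ∑ t ∈ P.parts, f t = f A + f B + ∑ t ∈ O, f t := by
    intro f
    rw [hPparts, Finset.sum_insert hAnotin, Finset.sum_insert hBnotin]
    ring
  have hsumP' : ∀ f : Finset V → ℝ, f ∅ = 0 →
      ∑ t ∈ parts', f t = f M + f A' + f B' + ∑ t ∈ O, f t := by
    intro f hf
    rw [hparts', Finset.sum_insert hMnotin, Finset.sum_union hOpieces]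
    have hps : ∑ t ∈ pieces, f t = f A' + f B' := by
      rw [hpieces, Finset.filter_insert, Finset.filter_singleton]
      by_cases h1 : A'.Nonempty
      · by_cases h2 : B'.Nonempty
        · have hne : A' ≠ B' := fun h => h1.ne_empty (disjoint_self.mp (h ▸ hA'B'))
          rw [if_pos h1, if_pos h2, Finset.sum_insert (by simpa using hne),
            Finset.sum_singleton]
        · rw [if_pos h1, if_neg h2, Finset.sum_insert (Finset.notMem_empty _),
            Finset.sum_empty, Finset.not_nonempty_iff_eq_empty.mp h2, hf]
      · by_cases h2 : B'.Nonempty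
        · rw [if_neg h1, if_pos h2, Finset.sum_singleton,
            Finset.not_nonempty_iff_eq_empty.mp h1, hf]
          ring
        · rw [if_neg h1, if_neg h2, Finset.sum_empty,
            Finset.not_nonempty_iff_eq_empty.mp h1, Finset.not_nonempty_iff_eq_empty.mp h2, hf]
          ring
    rw [hps]
    ring
  -- edge/volume identities
  have hcutXA' : ecut G X A' = 0 := ecut_component_zero G c hS hXS hA'S
  have hcutA'X : ecut G A' X = 0 := by rw [ecut_comm]; exact hcutXA'
  have hcutYB' : ecut G Y B' = 0 := ecut_component_zero G c hS hYS hB'S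
  have hcutB'Y : ecut G B' Y = 0 := by rw [ecut_comm]; exact hcutYB'
  have hEA : ein G A = ein G X + ein G A' := by
    unfold ein
    rw [← hAdec, ecut_union_left G _ hXA', ecut_union_right G _ hXA',
      ecut_union_right G _ hXA', hcutXA', hcutA'X]
    ring
  have hEB : ein G B = ein G Y + ein G B' := by
    unfold ein
    rw [← hBdec, ecut_union_left G _ hYB', ecut_union_right G _ hYB',
      ecut_union_right G _ hYB', hcutYB', hcutB'Y]
    ring
  have hEM : ein G M = ein G X + ein G Y + ecut G X Y := by
    unfold ein
    rw [hMdef, ecut_union_left G _ hXY, ecut_union_right G _ hXY,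
      ecut_union_right G _ hXY, ecut_comm G Y X]
    ring
  have hVA : gvol G A = gvol G X + gvol G A' := by rw [← hAdec, gvol_union G hXA']
  have hVB : gvol G B = gvol G Y + gvol G B' := by rw [← hBdec, gvol_union G hYB']
  have hVM : gvol G M = gvol G X + gvol G Y := gvol_union G hXY
  -- at least one crossing edge
  have hgain : 1 ≤ ecut G X Y := by
    unfold ecut
    have : (x, y) ∈ (X ×ˢ Y).filter fun p => G.Adj p.1 p.2 := by
      rw [Finset.mem_filter, Finset.mem_product]
      exact ⟨⟨Finset.mem_inter.mpr ⟨hxA, hxS⟩, Finset.mem_inter.mpr ⟨hyB, hyS⟩⟩, hxy⟩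
    exact_mod_cast Nat.one_le_iff_ne_zero.mpr
      (Finset.card_ne_zero_of_mem this)
  -- volume bounds
  have hvolXY : gvol G X + gvol G Y ≤ 2 * ein G S := by
    rw [← hVM, ← gvol_component G c hS]
    exact gvol_mono G hMS
  have heinS2 : (ein G S) ^ 2 < 2 * edgecount G := by
    have h2m : (0:ℝ) ≤ 2 * edgecount G := by linarith
    nlinarith [Real.sq_sqrt h2m, Real.sqrt_nonneg (2 * edgecount G), ein_nonneg G S, hsmall]
  have hgXgY : 2 * gvol G X * gvol G Y < 4 * edgecount G := by
    nlinarith [sq_nonneg (gvol G X - gvol G Y), heinS2, ein_nonneg G S,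
      mul_self_le_mul_self (by have h1 := gvol_nonneg G X; have h2 := gvol_nonneg G Y; linarith : (0:ℝ) ≤ gvol G X + gvol G Y) hvolXY]
  -- score comparison
  have hein0 : ein G ∅ = 0 := by unfold ein ecut; simp
  have hvol0 : (gvol G ∅) ^ 2 = 0 := by unfold gvol; simp
  have hdiff : modScore G P' - modScore G P =
      ecut G X Y / edgecount G -
        (2 * gvol G X * gvol G Y - 2 * gvol G X * gvol G A' - 2 * gvol G Y * gvol G B')
          / (4 * (edgecount G) ^ 2) := by
    unfold modScore
    rw [hP'parts, hsumP' (ein G) hein0, hsumP' (fun t => (gvol G t) ^ 2) hvol0,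
      hsumP (ein G), hsumP (fun t => (gvol G t) ^ 2), hEM, hEA, hEB, hVM, hVA, hVB]
    ring
  have hlt2 : (2 * gvol G X * gvol G Y - 2 * gvol G X * gvol G A' - 2 * gvol G Y * gvol G B')
      / (4 * (edgecount G) ^ 2) < 1 / edgecount G := by
    rw [div_lt_div_iff₀ (by positivity) hm]
    nlinarith [mul_lt_mul_of_pos_right hgXgY hm,
      mul_nonneg (mul_nonneg (gvol_nonneg G X) (gvol_nonneg G A')) hm.le,
      mul_nonneg (mul_nonneg (gvol_nonneg G Y) (gvol_nonneg G B')) hm.le]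
  have hlt3 : 1 / edgecount G ≤ ecut G X Y / edgecount G := by
    gcongr
  have hlt : modScore G P < modScore G P' := by
    have := hdiff
    linarith
  have hle : modScore G P' ≤ modularity G :=
    le_csSup (bddAbove_modScore G hm) ⟨P', rfl⟩
  rw [← hP] at hle
  linarith
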